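/- Let H be a real Hilbert space, L : H → ℝ a C¹ function with ‖DL(v)‖ ≤ C(1+‖v‖) for all v, and κ ∈ ℝ. Then the functional S(ξ, T) = T∫₀¹ (L(ξ(s)/T) + κ) ds is Gâteaux differentiable on L²([0,1], H) × (0,∞), with derivative dS(ξ,T)(η,r) = (r/T)·S(ξ,T) + T∫₀¹ DL(ξ/T)(η/T − rξ/T²) ds, and this derivative is a bounded linear functional on L²([0,1],H) × ℝ. -/

import Mathlib

open MeasureTheory Filter

/-- The free-period functional `S(ξ, T) = T ∫₀¹ (L(ξ(s)/T) + κ) ds` on paths. -/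
noncomputable def freePeriodAction {H : Type*} [NormedAddCommGroup H]
    [InnerProductSpace ℝ H] (L : H → ℝ) (κ : ℝ) (ξ : ℝ → H) (T : ℝ) : ℝ :=
  T * ∫ s in Set.Icc (0 : ℝ) 1, (L (T⁻¹ • ξ s) + κ)

/-!
Differentiate under the integral sign along `δ ↦ (ξ + δ • η, T + δ * r)`. For small `δ` the
rescaled path `(T + δ r)⁻¹ • (ξ + δ • η)` and its `δ`-derivative are bounded pointwise by
`g = c (‖ξ‖ + ‖η‖) ∈ L²`, so the linear growth of `DL` dominates the derivative of the integrand
by `C (1 + g)² ∈ L¹`. The same growth bound puts `s ↦ DL(ξ s / T)` in `L²`, and Cauchy–Schwarz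
bounds the derivative by the `L²` norm of `η` plus `|r|`.
-/

open scoped Topology

section Pointwise

variable {H : Type*} [NormedAddCommGroup H] [NormedSpace ℝ H] {L : H → ℝ} {C : ℝ}

theorem nonneg_of_norm_fderiv_le (hgrow : ∀ v, ‖fderiv ℝ L v‖ ≤ C * (1 + ‖v‖)) : 0 ≤ C := by
  simpa using (norm_nonneg _).trans (hgrow 0)

theorem abs_le_of_norm_fderiv_le (hL : Differentiable ℝ L)
    (hgrow : ∀ v, ‖fderiv ℝ L v‖ ≤ C * (1 + ‖v‖)) (v : H) :
    |L v| ≤ |L 0| + C * (1 + ‖v‖) ^ 2 := by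
  have hC := nonneg_of_norm_fderiv_le hgrow
  have hmvt : ‖L v - L 0‖ ≤ C * (1 + ‖v‖) * ‖v - 0‖ :=
    Convex.norm_image_sub_le_of_norm_fderiv_le (fun x _ => hL x)
      (fun x hx => (hgrow x).trans (by gcongr; simpa using hx)) (convex_closedBall 0 ‖v‖)
      (Metric.mem_closedBall_self (norm_nonneg v)) (by simp)
  rw [sub_zero, Real.norm_eq_abs] at hmvt
  nlinarith [abs_sub_abs_le_abs_sub (L v) (L 0), norm_nonneg v]

theorem norm_rescaled_path_le {T c r δ : ℝ} (hT : 0 < T) (hc : T / 2 < c) (hδ : |δ| ≤ 1)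
    (x y : H) :
    ‖c⁻¹ • (x + δ • y)‖ ≤ (2 / T + |r| * (2 / T) ^ 2) * (‖x‖ + ‖y‖) ∧
      ‖c⁻¹ • y + (-r / c ^ 2) • (x + δ • y)‖ ≤ (2 / T + |r| * (2 / T) ^ 2) * (‖x‖ + ‖y‖) := by
  have hc0 : 0 < c := (half_pos hT).trans hc
  have hcinv : c⁻¹ ≤ 2 / T := by simpa [inv_div] using inv_anti₀ (half_pos hT) hc.le
  have hw : ‖x + δ • y‖ ≤ ‖x‖ + ‖y‖ :=
    calc ‖x + δ • y‖ ≤ ‖x‖ + |δ| * ‖y‖ := by simpa [norm_smul] using norm_add_le x (δ • y)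
      _ ≤ ‖x‖ + ‖y‖ := by gcongr; nlinarith [norm_nonneg y]
  have hu : ‖c⁻¹ • (x + δ • y)‖ = c⁻¹ * ‖x + δ • y‖ := by
    rw [norm_smul, Real.norm_of_nonneg (inv_nonneg.2 hc0.le)]
  have hu' : ‖c⁻¹ • y + (-r / c ^ 2) • (x + δ • y)‖ ≤ c⁻¹ * ‖y‖ + |r| * c⁻¹ ^ 2 * ‖x + δ • y‖ := by
    refine (norm_add_le _ _).trans_eq ?_
    rw [norm_smul, norm_smul, Real.norm_of_nonneg (inv_nonneg.2 hc0.le), norm_div, norm_neg,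
      norm_pow, Real.norm_of_nonneg hc0.le, Real.norm_eq_abs, div_eq_mul_inv, inv_pow]
  constructor
  · calc ‖c⁻¹ • (x + δ • y)‖ ≤ 2 / T * (‖x‖ + ‖y‖) := by rw [hu]; gcongr
      _ ≤ _ := by gcongr; exact le_add_of_nonneg_right (by positivity)
  · calc ‖c⁻¹ • y + (-r / c ^ 2) • (x + δ • y)‖
        ≤ 2 / T * (‖x‖ + ‖y‖) + |r| * (2 / T) ^ 2 * (‖x‖ + ‖y‖) := by
          refine hu'.trans (add_le_add ?_ ?_) <;> gcongr
          exact le_add_of_nonneg_left (norm_nonneg _)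
      _ = _ := by ring

end Pointwise

section Pairing

variable {α : Type*} [MeasurableSpace α] {μ : Measure α}
  {H : Type*} [NormedAddCommGroup H] [NormedSpace ℝ H]

theorem integrable_apply_of_memLp_two {a : α → H →L[ℝ] ℝ} {w : α → H}
    (ha : MemLp a 2 μ) (hw : MemLp w 2 μ) : Integrable (fun x => a x (w x)) μ :=
  memLp_one_iff_integrable.1 <| ha.of_bilin (fun A v => A v) 1 hw
    (isBoundedBilinearMap_apply.continuous.comp_aestronglyMeasurable (ha.1.prodMk hw.1))
    (ae_of_all _ fun x => by simpa using (a x).le_opNNNorm (w x))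

theorem abs_integral_apply_le {a : α → H →L[ℝ] ℝ} {w : α → H}
    (ha : MemLp a 2 μ) (hw : MemLp w 2 μ) :
    |∫ x, a x (w x) ∂μ| ≤ √(∫ x, ‖a x‖ ^ 2 ∂μ) * √(∫ x, ‖w x‖ ^ 2 ∂μ) := by
  have hcs := integral_mul_le_Lp_mul_Lq_of_nonneg Real.HolderConjugate.two_two
    (ae_of_all _ fun x => norm_nonneg (a x)) (ae_of_all _ fun x => norm_nonneg (w x))
    (by simpa using ha.norm) (by simpa using hw.norm)
  simp only [Real.rpow_two, ← Real.sqrt_eq_rpow] at hcs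
  refine (norm_integral_le_of_norm_le (ha.norm.integrable_mul hw.norm)
    (ae_of_all _ fun x => (a x).le_opNorm (w x))).trans hcs

theorem exists_abs_le_sqrt_integral_add_abs {a : α → H →L[ℝ] ℝ} (ha : MemLp a 2 μ) {ξ : α → H}
    (hξ : MemLp ξ 2 μ) (S : ℝ) {T : ℝ} (hT : T ≠ 0) :
    ∃ K, ∀ η, MemLp η 2 μ → ∀ r : ℝ,
      |r / T * S + T * ∫ x, a x (T⁻¹ • η x - (r / T ^ 2) • ξ x) ∂μ| ≤
        K * (√(∫ x, ‖η x‖ ^ 2 ∂μ) + |r|) := by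
  set A := √(∫ x, ‖a x‖ ^ 2 ∂μ)
  set J := ∫ x, a x (ξ x) ∂μ
  refine ⟨A + (|S| + |J|) / |T|, fun η hη r => ?_⟩
  have hsplit : T * ∫ x, a x (T⁻¹ • η x - (r / T ^ 2) • ξ x) ∂μ =
      ∫ x, a x (η x) ∂μ - r / T * J := by
    simp only [map_sub, map_smul, smul_eq_mul]
    rw [integral_sub ((integrable_apply_of_memLp_two ha hη).const_mul _)
      ((integrable_apply_of_memLp_two ha hξ).const_mul _), integral_const_mul, integral_const_mul]
    field_simp
    rfl
  have hη_le := abs_integral_apply_le ha hη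
  have hrT : |r / T| = |r| / |T| := abs_div r T
  have hA : 0 ≤ A := Real.sqrt_nonneg _
  have hQ : 0 ≤ √(∫ x, ‖η x‖ ^ 2 ∂μ) := Real.sqrt_nonneg _
  have hB : 0 ≤ (|S| + |J|) / |T| := by positivity
  calc |r / T * S + T * ∫ x, a x (T⁻¹ • η x - (r / T ^ 2) • ξ x) ∂μ|
      ≤ |r / T| * |S| + |∫ x, a x (η x) ∂μ| + |r / T| * |J| := by
        rw [hsplit, ← abs_mul, ← abs_mul]
        exact (abs_add_le _ _).trans (by linarith [abs_sub (∫ x, a x (η x) ∂μ) (r / T * J)])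
    _ ≤ |r| / |T| * |S| + A * √(∫ x, ‖η x‖ ^ 2 ∂μ) + |r| / |T| * |J| := by
        rw [hrT]; gcongr
    _ ≤ (A + (|S| + |J|) / |T|) * (√(∫ x, ‖η x‖ ^ 2 ∂μ) + |r|) := by
        have : |r| / |T| * |S| + |r| / |T| * |J| = (|S| + |J|) / |T| * |r| := by ring
        nlinarith [mul_nonneg hA (abs_nonneg r), mul_nonneg hB hQ]

end Pairing

section Integral

variable {α : Type*} [MeasurableSpace α] {μ : Measure α} [IsFiniteMeasure μ]
  {H : Type*} [NormedAddCommGroup H] [NormedSpace ℝ H] {L : H → ℝ} {C : ℝ}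

theorem memLp_fderiv_comp (hL : ContDiff ℝ 1 L) (hgrow : ∀ v, ‖fderiv ℝ L v‖ ≤ C * (1 + ‖v‖))
    {u : α → H} (hu : MemLp u 2 μ) : MemLp (fun x => fderiv ℝ L (u x)) 2 μ := by
  have hbound : MemLp (fun x => C * (1 + ‖u x‖)) 2 μ :=
    ((memLp_const (1 : ℝ)).add hu.norm).const_mul C
  have hmeas : AEStronglyMeasurable (fun x => fderiv ℝ L (u x)) μ :=
    (hL.continuous_fderiv one_ne_zero).comp_aestronglyMeasurable hu.1
  exact hbound.of_le hmeas (ae_of_all _ fun x => (hgrow (u x)).trans (Real.le_norm_self _))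

theorem integrable_comp_of_norm_fderiv_le (hL : ContDiff ℝ 1 L)
    (hgrow : ∀ v, ‖fderiv ℝ L v‖ ≤ C * (1 + ‖v‖)) {u : α → H} {g : α → ℝ}
    (hu : AEStronglyMeasurable u μ) (hg : MemLp g 2 μ) (hug : ∀ᵐ x ∂μ, ‖u x‖ ≤ g x) :
    Integrable (fun x => L (u x)) μ := by
  have hG := ((memLp_const (1 : ℝ)).add hg).integrable_sq.const_mul C
  refine ((integrable_const |L 0|).add hG).mono' (hL.continuous.comp_aestronglyMeasurable hu) ?_
  filter_upwards [hug] with x hx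
  have hC := nonneg_of_norm_fderiv_le hgrow
  calc ‖L (u x)‖ ≤ |L 0| + C * (1 + ‖u x‖) ^ 2 :=
        abs_le_of_norm_fderiv_le (hL.differentiable one_ne_zero) hgrow (u x)
    _ ≤ |L 0| + C * (1 + g x) ^ 2 := by gcongr

theorem hasDerivAt_integral_comp_of_norm_fderiv_le (hL : ContDiff ℝ 1 L)
    (hgrow : ∀ v, ‖fderiv ℝ L v‖ ≤ C * (1 + ‖v‖)) {u u' : ℝ → α → H} {g : α → ℝ}
    {s : Set ℝ} {δ₀ : ℝ} (hs : s ∈ 𝓝 δ₀)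
    (hu_meas : ∀ᶠ δ in 𝓝 δ₀, AEStronglyMeasurable (u δ) μ)
    (hu'_meas : AEStronglyMeasurable (u' δ₀) μ) (hg : MemLp g 2 μ)
    (hu_le : ∀ᵐ x ∂μ, ∀ δ ∈ s, ‖u δ x‖ ≤ g x) (hu'_le : ∀ᵐ x ∂μ, ∀ δ ∈ s, ‖u' δ x‖ ≤ g x)
    (hu_deriv : ∀ᵐ x ∂μ, ∀ δ ∈ s, HasDerivAt (u · x) (u' δ x) δ) :
    HasDerivAt (fun δ => ∫ x, L (u δ x) ∂μ) (∫ x, fderiv ℝ L (u δ₀ x) (u' δ₀ x) ∂μ) δ₀ := by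
  have hδ₀ := mem_of_mem_nhds hs
  have hC := nonneg_of_norm_fderiv_le hgrow
  have hint : Integrable (fun x => L (u δ₀ x)) μ :=
    integrable_comp_of_norm_fderiv_le hL hgrow hu_meas.self_of_nhds hg
      (hu_le.mono fun x hx => hx δ₀ hδ₀)
  have hF'_meas : AEStronglyMeasurable (fun x => fderiv ℝ L (u δ₀ x) (u' δ₀ x)) μ :=
    isBoundedBilinearMap_apply.continuous.comp_aestronglyMeasurable
      (((hL.continuous_fderiv one_ne_zero).comp_aestronglyMeasurable
        hu_meas.self_of_nhds).prodMk hu'_meas)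
  have hF'_le : ∀ᵐ x ∂μ, ∀ δ ∈ s, ‖fderiv ℝ L (u δ x) (u' δ x)‖ ≤ C * (1 + g x) ^ 2 := by
    filter_upwards [hu_le, hu'_le] with x hx hx' δ hδ
    have hg0 : 0 ≤ g x := (norm_nonneg _).trans (hx' δ hδ)
    calc ‖fderiv ℝ L (u δ x) (u' δ x)‖ ≤ C * (1 + ‖u δ x‖) * ‖u' δ x‖ :=
          ((fderiv ℝ L (u δ x)).le_opNorm _).trans
            (mul_le_mul_of_nonneg_right (hgrow _) (norm_nonneg _))
      _ ≤ C * (1 + g x) * g x := by gcongr <;> simp_all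
      _ ≤ C * (1 + g x) ^ 2 := by nlinarith
  have hF_deriv : ∀ᵐ x ∂μ, ∀ δ ∈ s,
      HasDerivAt (fun δ => L (u δ x)) (fderiv ℝ L (u δ x) (u' δ x)) δ := by
    filter_upwards [hu_deriv] with x hx δ hδ
    exact ((hL.differentiable one_ne_zero) _).hasFDerivAt.comp_hasDerivAt δ (hx δ hδ)
  exact (hasDerivAt_integral_of_dominated_loc_of_deriv_le hs
    (hu_meas.mono fun δ hδ => hL.continuous.comp_aestronglyMeasurable hδ) hint hF'_meas hF'_le
    (((memLp_const (1 : ℝ)).add hg).integrable_sq.const_mul C) hF_deriv).2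

theorem hasDerivAt_integral_comp_rescaled_path (hL : ContDiff ℝ 1 L)
    (hgrow : ∀ v, ‖fderiv ℝ L v‖ ≤ C * (1 + ‖v‖)) {ξ η : α → H}
    (hξ : MemLp ξ 2 μ) (hη : MemLp η 2 μ) {T : ℝ} (hT : 0 < T) (r : ℝ) :
    HasDerivAt (fun δ => ∫ x, L ((T + δ * r)⁻¹ • (ξ x + δ • η x)) ∂μ)
      (∫ x, fderiv ℝ L (T⁻¹ • ξ x) (T⁻¹ • η x - (r / T ^ 2) • ξ x) ∂μ) 0 := by
  set u : ℝ → α → H := fun δ x => (T + δ * r)⁻¹ • (ξ x + δ • η x)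
  set u' : ℝ → α → H := fun δ x =>
    (T + δ * r)⁻¹ • η x + (-r / (T + δ * r) ^ 2) • (ξ x + δ • η x)
  set g : α → ℝ := fun x => (2 / T + |r| * (2 / T) ^ 2) * (‖ξ x‖ + ‖η x‖)
  set s : Set ℝ := {δ | T / 2 < T + δ * r} ∩ Set.Icc (-1) 1
  have hs : s ∈ 𝓝 0 := inter_mem
    ((isOpen_lt continuous_const (by fun_prop)).mem_nhds (by simp [half_lt_self hT]))
    (Icc_mem_nhds (by norm_num) (by norm_num))
  have hg : MemLp g 2 μ := (hξ.norm.add hη.norm).const_mul _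
  have hpos : ∀ δ ∈ s, 0 < T + δ * r := fun δ hδ => (half_pos hT).trans hδ.1
  have hbounds : ∀ x, ∀ δ ∈ s, ‖u δ x‖ ≤ g x ∧ ‖u' δ x‖ ≤ g x := fun x δ hδ =>
    norm_rescaled_path_le hT hδ.1 (abs_le.2 hδ.2) (ξ x) (η x)
  have hderiv : ∀ x, ∀ δ ∈ s, HasDerivAt (u · x) (u' δ x) δ := by
    intro x δ hδ
    have hc : HasDerivAt (fun δ => T + δ * r) r δ := by
      simpa using ((hasDerivAt_id δ).mul_const r).const_add T
    have hw : HasDerivAt (fun δ => ξ x + δ • η x) (η x) δ := by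
      simpa using ((hasDerivAt_id δ).smul_const (η x)).const_add (ξ x)
    exact (hc.inv (hpos δ hδ).ne').smul hw
  have hmeas : ∀ δ, AEStronglyMeasurable (u δ) μ := fun δ =>
    (hξ.1.add (hη.1.const_smul δ)).const_smul _
  have key := hasDerivAt_integral_comp_of_norm_fderiv_le hL hgrow hs (Eventually.of_forall hmeas)
    ((hη.1.const_smul _).add ((hξ.1.add (hη.1.const_smul 0)).const_smul _)) hg
    (ae_of_all _ fun x δ hδ => (hbounds x δ hδ).1) (ae_of_all _ fun x δ hδ => (hbounds x δ hδ).2)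
    (ae_of_all _ hderiv)
  simpa [u, u', neg_div, ← sub_eq_add_neg] using key

end Integral

theorem stmt_14_general {H : Type*} [NormedAddCommGroup H] [InnerProductSpace ℝ H]
    (L : H → ℝ) (hL : ContDiff ℝ 1 L) (C : ℝ)
    (hgrow : ∀ v : H, ‖fderiv ℝ L v‖ ≤ C * (1 + ‖v‖)) (κ : ℝ)
    (ξ : ℝ → H) (hξ : MemLp ξ 2 (volume.restrict (Set.Icc (0 : ℝ) 1)))
    (T : ℝ) (hT : 0 < T) :
    (∀ (η : ℝ → H), MemLp η 2 (volume.restrict (Set.Icc (0 : ℝ) 1)) → ∀ r : ℝ,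
      HasDerivAt (fun δ : ℝ => freePeriodAction L κ (fun s => ξ s + δ • η s) (T + δ * r))
        ((r / T) * freePeriodAction L κ ξ T +
          T * ∫ s in Set.Icc (0 : ℝ) 1,
            fderiv ℝ L (T⁻¹ • ξ s) (T⁻¹ • η s - (r / T ^ 2) • ξ s))
        0) ∧
    ∃ K : ℝ, ∀ (η : ℝ → H), MemLp η 2 (volume.restrict (Set.Icc (0 : ℝ) 1)) → ∀ r : ℝ,
      |(r / T) * freePeriodAction L κ ξ T +
          T * ∫ s in Set.Icc (0 : ℝ) 1,
            fderiv ℝ L (T⁻¹ • ξ s) (T⁻¹ • η s - (r / T ^ 2) • ξ s)| ≤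
        K * (Real.sqrt (∫ s in Set.Icc (0 : ℝ) 1, ‖η s‖ ^ 2) + |r|) := by
  refine ⟨fun η hη r => ?_, exists_abs_le_sqrt_integral_add_abs
    (memLp_fderiv_comp hL hgrow (hξ.const_smul T⁻¹)) hξ _ hT.ne'⟩
  have hgrowκ : ∀ v, ‖fderiv ℝ (fun v => L v + κ) v‖ ≤ C * (1 + ‖v‖) := by
    simpa only [fderiv_add_const] using hgrow
  have hI := hasDerivAt_integral_comp_rescaled_path (hL.add contDiff_const) hgrowκ hξ hη hT r
  simp only [fderiv_add_const] at hI
  have hprod := (((hasDerivAt_id' 0).mul_const r).const_add T).mul hI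
  refine hprod.congr_deriv ?_
  simp only [freePeriodAction, zero_mul, add_zero, zero_smul, one_mul]
  field_simp

/-- Gâteaux differentiability of the free-period action functional
`S(ξ,T) = T∫₀¹(L(ξ(s)/T) + κ)ds` on `L²([0,1],H) × (0,∞)` for a C¹ Lagrangian with
linearly growing derivative; the derivative is
`dS(ξ,T)(η,r) = (r/T)S(ξ,T) + T∫₀¹ DL(ξ/T)(η/T − rξ/T²) ds` and is a bounded linear
functional on `L²([0,1],H) × ℝ`. -/
theorem stmt_14 {H : Type*} [NormedAddCommGroup H] [InnerProductSpace ℝ H] [CompleteSpace H]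
    (L : H → ℝ) (hL : ContDiff ℝ 1 L) (C : ℝ) (hC : 0 < C)
    (hgrow : ∀ v : H, ‖fderiv ℝ L v‖ ≤ C * (1 + ‖v‖)) (κ : ℝ)
    (ξ : ℝ → H) (hξ : MemLp ξ 2 (volume.restrict (Set.Icc (0 : ℝ) 1)))
    (T : ℝ) (hT : 0 < T) :
    (∀ (η : ℝ → H), MemLp η 2 (volume.restrict (Set.Icc (0 : ℝ) 1)) → ∀ r : ℝ,
      HasDerivAt (fun δ : ℝ => freePeriodAction L κ (fun s => ξ s + δ • η s) (T + δ * r))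
        ((r / T) * freePeriodAction L κ ξ T +
          T * ∫ s in Set.Icc (0 : ℝ) 1,
            fderiv ℝ L (T⁻¹ • ξ s) (T⁻¹ • η s - (r / T ^ 2) • ξ s))
        0) ∧
    ∃ K : ℝ, ∀ (η : ℝ → H), MemLp η 2 (volume.restrict (Set.Icc (0 : ℝ) 1)) → ∀ r : ℝ,
      |(r / T) * freePeriodAction L κ ξ T +
          T * ∫ s in Set.Icc (0 : ℝ) 1,
            fderiv ℝ L (T⁻¹ • ξ s) (T⁻¹ • η s - (r / T ^ 2) • ξ s)| ≤
        K * (Real.sqrt (∫ s in Set.Icc (0 : ℝ) 1, ‖η s‖ ^ 2) + |r|) :=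
  stmt_14_general L hL C hgrow κ ξ hξ T hT
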